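/- arXiv:2307.10379 — 7 statements merged into one kernel-verified Lean document; each statement's English description precedes it below -/
import Mathlib

section
/- If M = ‖Q‖_{ℓ1} + δ, where ‖Q‖_{ℓ1} denotes the sum of the absolute values of all entries of Q and δ > 0, then for every x* minimizing f over the feasible set {x : Ax = b} and every infeasible x ∈ {0,1}^n, one has f(x*) + δ ≤ f(x) + M·‖Ax − b‖², i.e. the penalized QUBO is an exact reformulation with gap δ. -/
open Matrix

/-- With `M = ‖Q‖_{ℓ1} + δ`, the penalized QUBO is an exact
reformulation with gap `δ`. -/
theorem bigM_ell1_exact {n m : ℕ} (Q : Matrix (Fin n) (Fin n) ℤ)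
    (A : Matrix (Fin m) (Fin n) ℤ) (b : Fin m → ℤ) (δ : ℝ) (hδ : 0 < δ)
    (M : ℝ) (hM : M = ((∑ i, ∑ j, |Q i j| : ℤ) : ℝ) + δ)
    (xstar : Fin n → ℤ) (hbin : ∀ i, xstar i = 0 ∨ xstar i = 1)
    (hfeas : A.mulVec xstar = b)
    (hopt : ∀ x : Fin n → ℤ, (∀ i, x i = 0 ∨ x i = 1) → A.mulVec x = b →
      xstar ⬝ᵥ Q.mulVec xstar ≤ x ⬝ᵥ Q.mulVec x) :
    ∀ x : Fin n → ℤ, (∀ i, x i = 0 ∨ x i = 1) → A.mulVec x ≠ b →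
      ((xstar ⬝ᵥ Q.mulVec xstar : ℤ) : ℝ) + δ ≤
        ((x ⬝ᵥ Q.mulVec x : ℤ) : ℝ) +
          M * ((∑ i, (A.mulVec x i - b i) ^ 2 : ℤ) : ℝ) := by
  intro x hx hinf
  set L : ℤ := ∑ i, ∑ j, |Q i j| with hL
  -- f(x*) - f(x) ≤ L
  have hdiff : xstar ⬝ᵥ Q.mulVec xstar - x ⬝ᵥ Q.mulVec x ≤ L := by
    have h1 : xstar ⬝ᵥ Q.mulVec xstar - x ⬝ᵥ Q.mulVec x
        = ∑ i, ∑ j, Q i j * (xstar i * xstar j - x i * x j) := by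
      simp only [dotProduct, mulVec, dotProduct, Finset.mul_sum, ← Finset.sum_sub_distrib]
      apply Finset.sum_congr rfl; intro i _
      apply Finset.sum_congr rfl; intro j _
      ring
    rw [h1, hL]
    apply Finset.sum_le_sum; intro i _
    apply Finset.sum_le_sum; intro j _
    have hd : |xstar i * xstar j - x i * x j| ≤ 1 := by
      rcases hbin i with h1 | h1 <;> rcases hbin j with h2 | h2 <;>
        rcases hx i with h3 | h3 <;> rcases hx j with h4 | h4 <;>
        simp [h1, h2, h3, h4]
    calc Q i j * (xstar i * xstar j - x i * x j)
        ≤ |Q i j * (xstar i * xstar j - x i * x j)| := le_abs_self _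
      _ = |Q i j| * |xstar i * xstar j - x i * x j| := abs_mul _ _
      _ ≤ |Q i j| * 1 := mul_le_mul_of_nonneg_left hd (abs_nonneg _)
      _ = |Q i j| := mul_one _
  -- penalty ≥ 1
  have hs : (1 : ℤ) ≤ ∑ i, (A.mulVec x i - b i) ^ 2 := by
    obtain ⟨i, hi⟩ : ∃ i, A.mulVec x i ≠ b i := by
      by_contra h
      push_neg at h
      exact hinf (funext h)
    have hi1 : (1 : ℤ) ≤ (A.mulVec x i - b i) ^ 2 := by
      have : A.mulVec x i - b i ≠ 0 := sub_ne_zero.mpr hi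
      have := Int.one_le_abs this
      nlinarith [abs_nonneg (A.mulVec x i - b i), sq_abs (A.mulVec x i - b i)]
    calc (1 : ℤ) ≤ (A.mulVec x i - b i) ^ 2 := hi1
      _ ≤ ∑ i, (A.mulVec x i - b i) ^ 2 :=
          Finset.single_le_sum (f := fun k => (A.mulVec x k - b k) ^ 2) (fun j _ => sq_nonneg _) (Finset.mem_univ i)
  -- real arithmetic
  have hLnn : (0 : ℤ) ≤ L := Finset.sum_nonneg fun i _ =>
    Finset.sum_nonneg fun j _ => abs_nonneg _
  have hdiffR : ((xstar ⬝ᵥ Q.mulVec xstar : ℤ) : ℝ) - ((x ⬝ᵥ Q.mulVec x : ℤ) : ℝ)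
      ≤ (L : ℝ) := by exact_mod_cast hdiff
  have hsR : (1 : ℝ) ≤ ((∑ i, (A.mulVec x i - b i) ^ 2 : ℤ) : ℝ) := by exact_mod_cast hs
  have hLR : (0 : ℝ) ≤ (L : ℝ) := by exact_mod_cast hLnn
  have hMpos : 0 < M := by rw [hM]; linarith
  nlinarith [mul_le_mul_of_nonneg_left hsR hMpos.le]
end

section
/- Let x_feas be a feasible point of the constrained problem, δ > 0, and let f_unc be a lower bound on f over all of {0,1}^n (ignoring the constraints). Then with M = f(x_feas) − f_unc + δ, for every optimal point x* of the constrained problem and every infeasible point x ∈ {0,1}^n, one has f(x*) + δ ≤ f(x) + M·‖Ax − b‖². Hence the QUBO with this M is an exact reformulation with gap δ. -/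
open Matrix

/-- With `M = f(x_feas) - f_unc + δ`, where `x_feas` is any feasible
point and `f_unc` is a lower bound on `f` over all of `{0,1}^n`, the penalized
QUBO is an exact reformulation with gap `δ`. -/
theorem bigM_via_bounds_exact {n m : ℕ} (Q : Matrix (Fin n) (Fin n) ℤ)
    (A : Matrix (Fin m) (Fin n) ℤ) (b : Fin m → ℤ) (δ : ℝ) (hδ : 0 < δ)
    (xfeas : Fin n → ℤ) (hfeasbin : ∀ i, xfeas i = 0 ∨ xfeas i = 1)
    (hfeasc : A.mulVec xfeas = b)
    (func : ℝ)
    (hfunc : ∀ x : Fin n → ℤ, (∀ i, x i = 0 ∨ x i = 1) →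
      func ≤ ((x ⬝ᵥ Q.mulVec x : ℤ) : ℝ))
    (M : ℝ) (hM : M = ((xfeas ⬝ᵥ Q.mulVec xfeas : ℤ) : ℝ) - func + δ)
    (xstar : Fin n → ℤ) (hbin : ∀ i, xstar i = 0 ∨ xstar i = 1)
    (hfeas : A.mulVec xstar = b)
    (hopt : ∀ x : Fin n → ℤ, (∀ i, x i = 0 ∨ x i = 1) → A.mulVec x = b →
      xstar ⬝ᵥ Q.mulVec xstar ≤ x ⬝ᵥ Q.mulVec x) :
    ∀ x : Fin n → ℤ, (∀ i, x i = 0 ∨ x i = 1) → A.mulVec x ≠ b →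
      ((xstar ⬝ᵥ Q.mulVec xstar : ℤ) : ℝ) + δ ≤
        ((x ⬝ᵥ Q.mulVec x : ℤ) : ℝ) +
          M * ((∑ i, (A.mulVec x i - b i) ^ 2 : ℤ) : ℝ) := by
  intro x hx hne
  have hP : (1 : ℤ) ≤ ∑ i, (A.mulVec x i - b i) ^ 2 := by
    obtain ⟨i, hi⟩ : ∃ i, A.mulVec x i ≠ b i := by
      by_contra h
      push_neg at h
      exact hne (funext h)
    have h1 : (1 : ℤ) ≤ (A.mulVec x i - b i) ^ 2 := by
      have hne0 : A.mulVec x i - b i ≠ 0 := sub_ne_zero.mpr hi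
      have := sq_pos_of_ne_zero hne0
      omega
    calc (1:ℤ) ≤ (A.mulVec x i - b i)^2 := h1
      _ ≤ ∑ j, (A.mulVec x j - b j)^2 :=
        Finset.single_le_sum (f := fun j => (A.mulVec x j - b j)^2) (fun j _ => sq_nonneg _) (Finset.mem_univ i)
  have hPR : (1 : ℝ) ≤ ((∑ i, (A.mulVec x i - b i) ^ 2 : ℤ) : ℝ) := by
    exact_mod_cast hP
  have hopt' : ((xstar ⬝ᵥ Q.mulVec xstar : ℤ) : ℝ) ≤ ((xfeas ⬝ᵥ Q.mulVec xfeas : ℤ) : ℝ) := by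
    exact_mod_cast hopt xfeas hfeasbin hfeasc
  have hlb : func ≤ ((x ⬝ᵥ Q.mulVec x : ℤ) : ℝ) := hfunc x hx
  have hM0 : 0 ≤ M := by
    have := hfunc xfeas hfeasbin
    linarith [hM ▸ le_refl M]
  nlinarith [mul_le_mul_of_nonneg_left hPR hM0]
end

section
/- Suppose the QUBO reformulation with weight M is exact with gap δ, where δ ≤ δ* := f(x₁*) − f(x*), x₁* being a next-to-optimal feasible value. Let E₀, E₁ denote the smallest and second smallest distinct values attained by g_M(x) = f(x) + M‖Ax−b‖² on {0,1}^n, assuming g_M attains at least two distinct values. Then δ ≤ E₁ − E₀ ≤ δ*. -/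
open Matrix

/-- `x` is a 0/1 vector. -/
def BinVec {n : ℕ} (x : Fin n → ℤ) : Prop := ∀ i, x i = 0 ∨ x i = 1

/-- Objective `f(x) = xᵀQx` (as a real number). -/
def fObj {n : ℕ} (Q : Matrix (Fin n) (Fin n) ℤ) (x : Fin n → ℤ) : ℝ :=
  ((x ⬝ᵥ Q.mulVec x : ℤ) : ℝ)

/-- Penalty `‖Ax - b‖²` (as a real number). -/
def pen {n m : ℕ} (A : Matrix (Fin m) (Fin n) ℤ) (b : Fin m → ℤ)
    (x : Fin n → ℤ) : ℝ :=
  ((∑ i, (A.mulVec x i - b i) ^ 2 : ℤ) : ℝ)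


/-- For an exact reformulation with gap `δ ≤ δ* = f(x₁*) - f(x*)`,
the two smallest distinct values `E₀ ≤ E₁` of `g_M` on `{0,1}^n` satisfy
`δ ≤ E₁ - E₀ ≤ δ*`. -/
theorem energy_gap_bounds {n m : ℕ}
    (Q : Matrix (Fin n) (Fin n) ℤ) (A : Matrix (Fin m) (Fin n) ℤ)
    (b : Fin m → ℤ) (M δ : ℝ) (hM : 0 < M) (hδ : 0 < δ)
    (xstar : Fin n → ℤ) (hbin : BinVec xstar) (hfeas : A.mulVec xstar = b)
    (hopt : ∀ x : Fin n → ℤ, BinVec x → A.mulVec x = b →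
      fObj Q xstar ≤ fObj Q x)
    (x1 : Fin n → ℤ) (hbin1 : BinVec x1) (hfeas1 : A.mulVec x1 = b)
    (hgt1 : fObj Q xstar < fObj Q x1)
    (hnext : ∀ x : Fin n → ℤ, BinVec x → A.mulVec x = b →
      fObj Q xstar < fObj Q x → fObj Q x1 ≤ fObj Q x)
    (hexact : ∀ x : Fin n → ℤ, BinVec x → A.mulVec x ≠ b →
      fObj Q xstar + δ ≤ fObj Q x + M * pen A b x)
    (hδstar : δ ≤ fObj Q x1 - fObj Q xstar)
    (E0 E1 : ℝ)
    (hE0 : IsLeast {v : ℝ | ∃ x : Fin n → ℤ, BinVec x ∧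
      fObj Q x + M * pen A b x = v} E0)
    (hE1 : IsLeast {v : ℝ | (∃ x : Fin n → ℤ, BinVec x ∧
      fObj Q x + M * pen A b x = v) ∧ E0 < v} E1) :
    δ ≤ E1 - E0 ∧ E1 - E0 ≤ fObj Q x1 - fObj Q xstar := by
  have pen0 : ∀ x : Fin n → ℤ, A.mulVec x = b → pen A b x = 0 := by
    intro x hx
    simp [pen, hx]
  have gstar : fObj Q xstar + M * pen A b xstar = fObj Q xstar := by
    rw [pen0 xstar hfeas]; ring
  -- E0 = f(xstar)
  have hE0le : E0 ≤ fObj Q xstar := hE0.2 ⟨xstar, hbin, gstar⟩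
  have hE0ge : fObj Q xstar ≤ E0 := by
    obtain ⟨x, hbx, hx⟩ := hE0.1
    rw [← hx]
    by_cases hfx : A.mulVec x = b
    · rw [pen0 x hfx]; simpa using hopt x hbx hfx
    · linarith [hexact x hbx hfx]
  have hE0eq : E0 = fObj Q xstar := le_antisymm hE0le hE0ge
  have g1 : fObj Q x1 + M * pen A b x1 = fObj Q x1 := by
    rw [pen0 x1 hfeas1]; ring
  have hE1le : E1 ≤ fObj Q x1 := by
    apply hE1.2
    exact ⟨⟨x1, hbin1, g1⟩, by rw [hE0eq]; linarith⟩
  have hE1ge : fObj Q xstar + δ ≤ E1 := by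
    obtain ⟨⟨x, hbx, hx⟩, hlt⟩ := hE1.1
    rw [← hx]
    by_cases hfx : A.mulVec x = b
    · rw [pen0 x hfx]
      have hlt' : fObj Q xstar < fObj Q x := by
        rw [hE0eq] at hlt
        rw [← hx, pen0 x hfx] at hlt; linarith
      have := hnext x hbx hfx hlt'
      linarith
    · exact hexact x hbx hfx
  constructor <;> rw [hE0eq] <;> linarith
end

section
/- Under the assumptions of an exact reformulation with weight M and gap δ ≤ δ*, the normalized spectral gap Δ_M := (E₁ − E₀)/(E_max − E₀) of the penalized objective g_M satisfies Δ_M ≤ Δ₀ := (f(x₁*) − f(x*))/(max_{x ∈ C} f(x) − f(x*)), the 'spectral gap' of the original constrained problem, provided max_{x∈C} f(x) > f(x*). -/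
open Matrix

/-- For an exact reformulation with gap `δ ≤ δ*`, the normalized
spectral gap `Δ_M = (E₁ - E₀)/(E_max - E₀)` of the penalized objective is at
most the spectral gap `Δ₀ = (f(x₁*) - f(x*))/(max_C f - f(x*))` of the original
constrained problem. -/
theorem normalized_gap_le_constrained_gap {n m : ℕ}
    (Q : Matrix (Fin n) (Fin n) ℤ) (A : Matrix (Fin m) (Fin n) ℤ)
    (b : Fin m → ℤ) (M δ : ℝ) (hM : 0 < M) (hδ : 0 < δ)
    (xstar : Fin n → ℤ) (hbin : BinVec xstar) (hfeas : A.mulVec xstar = b)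
    (hopt : ∀ x : Fin n → ℤ, BinVec x → A.mulVec x = b →
      fObj Q xstar ≤ fObj Q x)
    (x1 : Fin n → ℤ) (hbin1 : BinVec x1) (hfeas1 : A.mulVec x1 = b)
    (hgt1 : fObj Q xstar < fObj Q x1)
    (hnext : ∀ x : Fin n → ℤ, BinVec x → A.mulVec x = b →
      fObj Q xstar < fObj Q x → fObj Q x1 ≤ fObj Q x)
    (hexact : ∀ x : Fin n → ℤ, BinVec x → A.mulVec x ≠ b →
      fObj Q xstar + δ ≤ fObj Q x + M * pen A b x)
    (hδstar : δ ≤ fObj Q x1 - fObj Q xstar)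
    (E0 E1 Emax fC : ℝ)
    (hE0 : IsLeast {v : ℝ | ∃ x : Fin n → ℤ, BinVec x ∧
      fObj Q x + M * pen A b x = v} E0)
    (hE1 : IsLeast {v : ℝ | (∃ x : Fin n → ℤ, BinVec x ∧
      fObj Q x + M * pen A b x = v) ∧ E0 < v} E1)
    (hEmax : IsGreatest {v : ℝ | ∃ x : Fin n → ℤ, BinVec x ∧
      fObj Q x + M * pen A b x = v} Emax)
    (hfC : IsGreatest {v : ℝ | ∃ x : Fin n → ℤ, BinVec x ∧
      A.mulVec x = b ∧ fObj Q x = v} fC)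
    (hfCgt : fObj Q xstar < fC) :
    (E1 - E0) / (Emax - E0) ≤
      (fObj Q x1 - fObj Q xstar) / (fC - fObj Q xstar) := by
  have hpen0 : ∀ x : Fin n → ℤ, A.mulVec x = b → pen A b x = 0 := by
    intro x hx
    simp [pen, hx]
  -- E0 = f(x*)
  have hE0star : E0 = fObj Q xstar := by
    have h1 : E0 ≤ fObj Q xstar := by
      apply hE0.2
      exact ⟨xstar, hbin, by rw [hpen0 xstar hfeas]; ring⟩
    have h2 : fObj Q xstar ≤ E0 := by
      obtain ⟨x, hx, hxv⟩ := hE0.1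
      by_cases hxf : A.mulVec x = b
      · rw [← hxv, hpen0 x hxf]
        have := hopt x hx hxf
        linarith
      · have := hexact x hx hxf
        linarith
    linarith
  have hE1le : E1 ≤ fObj Q x1 := by
    apply hE1.2
    refine ⟨⟨x1, hbin1, by rw [hpen0 x1 hfeas1]; ring⟩, ?_⟩
    rw [hE0star]; exact hgt1
  have hfCle : fC ≤ Emax := by
    obtain ⟨xc, hxc, hxcf, hxcv⟩ := hfC.1
    apply hEmax.2
    exact ⟨xc, hxc, by rw [hpen0 xc hxcf, hxcv]; ring⟩
  have hE1gt : E0 < E1 := hE1.1.2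
  have h1 : 0 < fC - fObj Q xstar := by linarith
  apply div_le_div₀ (by linarith) (by linarith) h1 (by linarith)
end

section
/- In the reduction of the constant-Hamming-weight decision problem, the objective F(x,p,m) = f(x) + α|x|(p+m) + α(n³+1)(p − m − |x| + k)², minimized over x ∈ {0,1}^n and integers p, m ∈ {0,…,n}, equals at the optimum over (p,m) for each fixed x the value f(x) + α|x|·||x| − k|, provided α > 0. -/
/-- For each fixed binary `x`, the minimum over
`p, m ∈ {0,…,n}` of `f(x) + α|x|(p+m) + α(n³+1)(p - m - |x| + k)²` equals
`f(x) + α|x|·||x| - k|`. -/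
theorem hamming_weight_gadget_min {n : ℕ} (hn : 1 ≤ n)
    (f : (Fin n → ℤ) → ℝ) (α : ℝ) (hα : 0 < α) (k : ℤ)
    (hk1 : 1 ≤ k) (hkn : k ≤ (n : ℤ))
    (x : Fin n → ℤ) (hbin : ∀ i, x i = 0 ∨ x i = 1) :
    IsLeast {v : ℝ | ∃ p m : ℤ, 0 ≤ p ∧ p ≤ (n : ℤ) ∧ 0 ≤ m ∧ m ≤ (n : ℤ) ∧
        v = f x + α * ((∑ i, x i : ℤ) : ℝ) * ((p : ℝ) + (m : ℝ)) +
          α * ((n : ℝ) ^ 3 + 1) *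
            ((p : ℝ) - (m : ℝ) - ((∑ i, x i : ℤ) : ℝ) + (k : ℝ)) ^ 2}
      (f x + α * ((∑ i, x i : ℤ) : ℝ) *
        |((∑ i, x i : ℤ) : ℝ) - (k : ℝ)|) := by
  set S : ℤ := ∑ i, x i with hS
  have hS0 : 0 ≤ S := Finset.sum_nonneg fun i _ => by rcases hbin i with h | h <;> simp [h]
  have hSn : S ≤ (n : ℤ) := by
    calc S ≤ ∑ _i : Fin n, (1 : ℤ) :=
          Finset.sum_le_sum fun i _ => by rcases hbin i with h | h <;> simp [h]
      _ = n := by simp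
  have hnc : (1 : ℤ) ≤ (n : ℤ) := by exact_mod_cast hn
  have habs : |((S : ℝ)) - (k : ℝ)| = ((|S - k| : ℤ) : ℝ) := by
    rw [show (S : ℝ) - (k : ℝ) = ((S - k : ℤ) : ℝ) by push_cast; ring, ← Int.cast_abs]
  constructor
  · rcases le_or_gt k S with h | h
    · refine ⟨S - k, 0, by omega, by omega, le_refl 0, by omega, ?_⟩
      have h1 : |S - k| = S - k := abs_of_nonneg (by omega)
      rw [habs, h1]
      push_cast
      ring
    · refine ⟨0, k - S, le_refl 0, by omega, by omega, by omega, ?_⟩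
      have h1 : |S - k| = -(S - k) := abs_of_nonpos (by omega)
      rw [habs, h1]
      push_cast
      ring
  · rintro v ⟨p, m, hp0, hpn, hm0, hmn, rfl⟩
    have key : S * |S - k| ≤ S * (p + m) + ((n : ℤ) ^ 3 + 1) * (p - m - S + k) ^ 2 := by
      rcases eq_or_ne (p - m - S + k) 0 with hd | hd
      · have h1 : |S - k| ≤ p + m := by
          rcases abs_cases (S - k) with ⟨h1, _⟩ | ⟨h1, _⟩ <;> omega
        have h2 := mul_le_mul_of_nonneg_left h1 hS0
        rw [hd]
        nlinarith
      · have hd1 : 1 ≤ |p - m - S + k| := Int.one_le_abs hd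
        have hd2 : 1 ≤ (p - m - S + k) ^ 2 := by nlinarith [sq_abs (p - m - S + k)]
        have ha : |S - k| ≤ (n : ℤ) := by
          rcases abs_cases (S - k) with ⟨h1, _⟩ | ⟨h1, _⟩ <;> omega
        have hpm : 0 ≤ S * (p + m) := mul_nonneg hS0 (by omega)
        have hb : S * |S - k| ≤ (n : ℤ) * (n : ℤ) :=
          mul_le_mul hSn ha (abs_nonneg _) (le_trans zero_le_one hnc)
        have hc : ((n : ℤ) ^ 3 + 1) * 1 ≤ ((n : ℤ) ^ 3 + 1) * (p - m - S + k) ^ 2 :=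
          mul_le_mul_of_nonneg_left hd2 (by positivity)
        nlinarith [mul_le_mul_of_nonneg_left hnc (mul_nonneg (le_trans zero_le_one hnc) (le_trans zero_le_one hnc))]
    have keyR : ((S * |S - k| : ℤ) : ℝ) ≤
        ((S * (p + m) + ((n : ℤ) ^ 3 + 1) * (p - m - S + k) ^ 2 : ℤ) : ℝ) :=
      Int.cast_le.mpr key
    push_cast at keyR
    rw [habs]
    push_cast
    nlinarith [mul_le_mul_of_nonneg_left keyR hα.le]
end

section
/- Suppose min_{|x| = k} f(x) ≥ a + δ where f(0) > a, and choose α ≥ max f − min f + f(0) − a. Then with M = (f(0) − a)/k, for every x ≠ 0 one has f(x) + α|x|·||x| − k| + M|x| ≥ f(0) + δ; i.e. the penalized reformulation of the trivial problem (minimize f(x) + α|x|·||x|−k| subject to x = 0) with weight M is exact with gap δ. -/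
lemma sum_indicator_lt (n m : ℕ) (h : m ≤ n) :
    ∑ i : Fin n, (if (i : ℕ) < m then (1:ℤ) else 0) = m := by
  rw [Fin.sum_univ_eq_sum_range (fun i => if i < m then (1:ℤ) else 0)]
  rw [Finset.sum_ite, Finset.sum_const, Finset.sum_const]
  have : (Finset.range n).filter (· < m) = Finset.range m := by
    ext i; simp; omega
  simp [this]

/-- If `min_{|x| = k} f(x) ≥ a + δ` and `f(0) > a`, then with
`α ≥ max f - min f + f(0) - a` and `M = (f(0) - a)/k`, every `x ≠ 0` has
penalized objective at least `f(0) + δ`: the reformulation is exact with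
gap `δ`. -/
theorem hamming_reduction_exact_greater {n : ℕ} (hn : 1 ≤ n)
    (f : (Fin n → ℤ) → ℝ) (a δ α M : ℝ) (hδ : 0 < δ) (k : ℤ)
    (hk1 : 1 ≤ k) (hkn : k ≤ (n : ℤ))
    (hmin : ∀ x : Fin n → ℤ, (∀ i, x i = 0 ∨ x i = 1) →
      (∑ i, x i) = k → a + δ ≤ f x)
    (hf0 : a < f 0)
    (hα : ∀ x y : Fin n → ℤ, (∀ i, x i = 0 ∨ x i = 1) →
      (∀ i, y i = 0 ∨ y i = 1) → f x - f y + f 0 - a ≤ α)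
    (hM : M = (f 0 - a) / (k : ℝ)) :
    ∀ x : Fin n → ℤ, (∀ i, x i = 0 ∨ x i = 1) → x ≠ 0 →
      f 0 + δ ≤ f x + α * ((∑ i, x i : ℤ) : ℝ) *
        |((∑ i, x i : ℤ) : ℝ) - (k : ℝ)| + M * ((∑ i, x i : ℤ) : ℝ) := by
  intro x hx hx0
  set s : ℤ := ∑ i, x i with hs
  have hsnn : ∀ i ∈ Finset.univ, (0:ℤ) ≤ x i := by
    intro i _; rcases hx i with h | h <;> simp [h]
  have hs0 : 0 ≤ s := Finset.sum_nonneg hsnn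
  have hs1 : 1 ≤ s := by
    rcases eq_or_lt_of_le hs0 with h | h
    · exfalso
      apply hx0
      funext i
      have := (Finset.sum_eq_zero_iff_of_nonneg hsnn).mp h.symm i (Finset.mem_univ i)
      simpa using this
    · omega
  have hs1R : (1:ℝ) ≤ (s:ℝ) := by exact_mod_cast hs1
  have hkR : (1:ℝ) ≤ (k:ℝ) := by exact_mod_cast hk1
  by_cases hsk : s = k
  · -- penalty vanishes, M*k = f 0 - a
    have hfx : a + δ ≤ f x := hmin x hx hsk
    have hMk : M * (k:ℝ) = f 0 - a := by
      rw [hM]; field_simp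
    rw [hsk]
    simp only [sub_self, abs_zero, mul_zero, zero_mul]
    linarith [hMk]
  · -- |s-k| ≥ 1
    have habs : (1:ℝ) ≤ |(s:ℝ) - (k:ℝ)| := by
      have : (1:ℤ) ≤ |s - k| := Int.one_le_abs (by omega)
      calc (1:ℝ) ≤ ((|s - k| : ℤ) : ℝ) := by exact_mod_cast this
        _ = |(s:ℝ) - (k:ℝ)| := by push_cast [Int.cast_abs]; ring_nf
    -- a witness with sum = k
    set m : ℕ := k.toNat with hm
    have hmn : m ≤ n := by omega
    set y : Fin n → ℤ := fun i => if (i : ℕ) < m then 1 else 0 with hy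
    have hyb : ∀ i, y i = 0 ∨ y i = 1 := by
      intro i; by_cases h : (i : ℕ) < m <;> simp [hy, h]
    have hysum : (∑ i, y i) = k := by
      rw [hy]
      rw [sum_indicator_lt n m hmn]
      omega
    have hαy : f y - f x + f 0 - a ≤ α := hα y x hyb hx
    have hfy : a + δ ≤ f y := hmin y hyb hysum
    have hα0 : f 0 - f 0 + f 0 - a ≤ α := hα 0 0 (fun i => Or.inl rfl) (fun i => Or.inl rfl)
    have hαpos : 0 ≤ α := by linarith
    -- α * s * |s-k| ≥ α
    have hsabs : (1:ℝ) ≤ (s:ℝ) * |(s:ℝ) - (k:ℝ)| := by nlinarith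
    have h1 : α ≤ α * (s:ℝ) * |(s:ℝ) - (k:ℝ)| := by
      nlinarith [mul_le_mul_of_nonneg_left hsabs hαpos]
    have hMpos : 0 ≤ M := by
      rw [hM]
      exact div_nonneg (by linarith) (by linarith)
    have h2 : 0 ≤ M * (s:ℝ) := mul_nonneg hMpos (by linarith)
    linarith
end

section
/- Conversely, if min_{|x| = k} f(x) ≤ a and f(0) > a, then with M = (f(0) − a)/k there exists an infeasible point x (namely any minimizer with |x| = k) whose penalized objective f(x) + α|x|·||x|−k| + M|x| ≤ f(0); hence the reformulation with weight M is not exact for any gap δ > 0. -/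
/-- If `min_{|x| = k} f(x) ≤ a` and `f(0) > a`, then with
`M = (f(0) - a)/k` there is an infeasible point (any minimizer of weight `k`)
whose penalized objective is at most `f(0)`; hence the reformulation with this
`M` is not exact for any gap `δ > 0`. -/
theorem hamming_reduction_not_exact_smaller {n : ℕ} (hn : 1 ≤ n)
    (f : (Fin n → ℤ) → ℝ) (a α M : ℝ) (k : ℤ)
    (hk1 : 1 ≤ k) (hkn : k ≤ (n : ℤ))
    (hmin : ∃ x : Fin n → ℤ, (∀ i, x i = 0 ∨ x i = 1) ∧
      (∑ i, x i) = k ∧ f x ≤ a)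
    (hf0 : a < f 0) (hα : 0 ≤ α)
    (hM : M = (f 0 - a) / (k : ℝ)) :
    (∃ x : Fin n → ℤ, (∀ i, x i = 0 ∨ x i = 1) ∧ x ≠ 0 ∧
      f x + α * ((∑ i, x i : ℤ) : ℝ) * |((∑ i, x i : ℤ) : ℝ) - (k : ℝ)| +
        M * ((∑ i, x i : ℤ) : ℝ) ≤ f 0) ∧
    ∀ δ : ℝ, 0 < δ →
      ¬ (∀ x : Fin n → ℤ, (∀ i, x i = 0 ∨ x i = 1) → x ≠ 0 →
        f 0 + δ ≤ f x + α * ((∑ i, x i : ℤ) : ℝ) *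
          |((∑ i, x i : ℤ) : ℝ) - (k : ℝ)| + M * ((∑ i, x i : ℤ) : ℝ)) := by
  obtain ⟨x, hx01, hxsum, hxa⟩ := hmin
  have hk0 : (k : ℝ) ≠ 0 := by positivity
  have hxne : x ≠ 0 := by
    intro h
    simp [h] at hxsum
    omega
  have key : f x + α * ((∑ i, x i : ℤ) : ℝ) * |((∑ i, x i : ℤ) : ℝ) - (k : ℝ)| +
      M * ((∑ i, x i : ℤ) : ℝ) ≤ f 0 := by
    rw [hxsum, sub_self, abs_zero, mul_zero, hM, div_mul_cancel₀ _ hk0]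
    linarith
  refine ⟨⟨x, hx01, hxne, key⟩, ?_⟩
  intro δ hδ h
  have := h x hx01 hxne
  linarith
end
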